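/- arXiv:1210.0959 — 3 statements merged into one kernel-verified Lean document; each statement's English description precedes it below -/
import Mathlib

section
/- For every w_0 ≥ 0 there exists a unique workload fluid model solution w with w(0) = w_0. -/
/-!
With the drift `H(x) = ∑ₖ ρₖ Gₖ(x) - 1`, a workload fluid model solution is exactly a nonnegative
solution of the autonomous equation `w' = H(w)`. The drift is continuous (the `Γₖ` have no atoms),
nonincreasing, `H(0) = ρ - 1 > 0`, and `H → -1` at infinity.

Existence: let `a` be the zero of `H` nearest to `w₀` in the direction of the sign of `H(w₀)`
(it lies in `[0, ∞)` because `H(0) > 0`). Until it reaches `a`, the solution is the inverse of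
`ψ(x) = ∫_{w₀}^x du / H(u)`; afterwards it stays at `a` (it may never reach `a` if `ψ` diverges).
The inverse is taken as `t ↦ sup {x | ψ x ≤ t}`, which is continuous because `ψ` is strictly
monotone.

Uniqueness: since `H` is nonincreasing, `(w₁ - w₂)²` has derivative
`2 (w₁ - w₂)(H(w₁) - H(w₂)) ≤ 0`, so it stays at its initial value `0`.
-/

open MeasureTheory Set Filter Topology
open scoped ENNReal

noncomputable section

namespace OverloadedFIFO

/-- The complement `G(x) = Γ((x, ∞))` of the cumulative distribution function of `Γ`. -/
def Gk (Γ : MeasureTheory.Measure ℝ) (x : ℝ) : ℝ := (Γ (Set.Ioi x)).toReal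

/-- Model data: `K` job classes with arrival rates `lam`, service rates `mu`, and
deadline (patience) distributions `Γ`, in the overloaded regime `ρ > 1`.  Each `Γ k` is a
Borel probability measure on `[0,∞)` (no mass on negatives), with continuous c.d.f.
(no atoms, in particular `Γ k {0} = 0`) and finite mean. -/
structure Data (K : ℕ) where
  lam : Fin K → ℝ
  mu : Fin K → ℝ
  Γ : Fin K → MeasureTheory.Measure ℝ
  lam_pos : ∀ k, 0 < lam k
  mu_pos : ∀ k, 0 < mu k
  Γ_prob : ∀ k, MeasureTheory.IsProbabilityMeasure (Γ k)
  Γ_null_neg : ∀ k, Γ k (Set.Iio 0) = 0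
  Γ_noAtom : ∀ k, ∀ x : ℝ, Γ k {x} = 0
  Γ_finite_mean : ∀ k, MeasureTheory.Integrable id (Γ k)
  rho_gt_one : 1 < ∑ k, lam k / mu k

instance {K : ℕ} (D : Data K) (k : Fin K) : IsProbabilityMeasure (D.Γ k) := D.Γ_prob k

/-- `ρ_k = λ_k / μ_k`. -/
def Data.rho {K : ℕ} (D : Data K) (k : Fin K) : ℝ := D.lam k / D.mu k

/-- `ρ = Σ_k ρ_k`. -/
def Data.rhoTot {K : ℕ} (D : Data K) : ℝ := ∑ k, D.rho k

/-- A workload fluid model solution: a nonnegative function `w` on `[0,∞)` satisfying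
`w(t) = w(0) + Σ_k ρ_k ∫_0^t G_k(w(s)) ds − t` for all `t ≥ 0`. -/
def IsWorkloadSol {K : ℕ} (D : Data K) (w : ℝ → ℝ) : Prop :=
  (∀ t : ℝ, 0 ≤ t → 0 ≤ w t) ∧
  (∀ k : Fin K, ∀ t : ℝ, 0 ≤ t →
    IntervalIntegrable (fun s => Gk (D.Γ k) (w s)) volume 0 t) ∧
  (∀ t : ℝ, 0 ≤ t →
    w t = w 0 + (∑ k, D.rho k * ∫ s in (0:ℝ)..t, Gk (D.Γ k) (w s)) - t)

/-- `w_l = sup {u ≥ 0 : Σ_k ρ_k G_k(u) > 1}`. -/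
def wl {K : ℕ} (D : Data K) : ℝ :=
  sSup {u : ℝ | 0 ≤ u ∧ 1 < ∑ k, D.rho k * Gk (D.Γ k) u}

/-- `w_u = sup {u ≥ 0 : Σ_k ρ_k G_k(u) ≥ 1}`. -/
def wu {K : ℕ} (D : Data K) : ℝ :=
  sSup {u : ℝ | 0 ≤ u ∧ 1 ≤ ∑ k, D.rho k * Gk (D.Γ k) u}

/-- `d_max = max_k sup {x ≥ 0 : G_k(x) > 0} ∈ (0,∞]`, as an extended nonnegative real. -/
def dmax {K : ℕ} (D : Data K) : ℝ≥0∞ :=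
  ⨆ k, sSup (ENNReal.ofReal '' {x : ℝ | 0 ≤ x ∧ 0 < Gk (D.Γ k) x})

/-- `τ(t) = inf {s ∈ [0,t] : w(s) + s ≥ t}`. -/
def tauF (w : ℝ → ℝ) (t : ℝ) : ℝ := sInf {s : ℝ | 0 ≤ s ∧ s ≤ t ∧ t ≤ w s + s}

/-- The nonnegative quadrant `[0,∞)²`. -/
def Q : Set (ℝ × ℝ) := {p | 0 ≤ p.1 ∧ 0 ≤ p.2}

/-- The shift `B_x = {y ∈ [0,∞)² : y − x ∈ B}` of a set `B ⊆ [0,∞)²`. -/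
def shift (B : Set (ℝ × ℝ)) (x : ℝ × ℝ) : Set (ℝ × ℝ) :=
  {y | y ∈ Q ∧ (y.1 - x.1, y.2 - x.2) ∈ B}

/-- Diagonal shift `B_t = B_{(t,t)}`. -/
def shiftd (B : Set (ℝ × ℝ)) (t : ℝ) : Set (ℝ × ℝ) := shift B (t, t)

/-- The set `C = ([0,∞)×{0}) ∪ ({0}×[0,∞))`. -/
def Cset : Set (ℝ × ℝ) := {p | (0 ≤ p.1 ∧ p.2 = 0) ∨ (p.1 = 0 ∧ 0 ≤ p.2)}

/-- The `κ`-enlargement `B^κ = {x ∈ [0,∞)² : inf_{y ∈ B} ‖x−y‖ < κ}` (Euclidean norm). -/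
def enlarge (B : Set (ℝ × ℝ)) (κ : ℝ) : Set (ℝ × ℝ) :=
  {x | x ∈ Q ∧ ∃ y ∈ B, Real.sqrt ((x.1 - y.1) ^ 2 + (x.2 - y.2) ^ 2) < κ}

/-- `w_ϑ = sup {x ≥ 0 : ϑ_+([x,∞)×[0,∞)) > 0}` for a `K`-tuple `ϑ` of measures on `[0,∞)²`. -/
def wMeas {K : ℕ} (ϑ : Fin K → MeasureTheory.Measure (ℝ × ℝ)) : ℝ :=
  sSup {x : ℝ | 0 ≤ x ∧ 0 < ∑ k, ϑ k (Set.Ici x ×ˢ Set.Ici (0:ℝ))}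

/-- Membership in the set `I` of admissible initial measures: each `ϑ k` is a finite Borel
measure on `[0,∞)²`; (I.1) the superposition charges no corner set `C_x`, `x ∈ [0,∞)²`;
(I.2) `w_ϑ < ∞`; (I.3) `max_k G_k(w_ϑ − ε) > 0` for every `ε > 0`. -/
def MemI {K : ℕ} (D : Data K) (ϑ : Fin K → MeasureTheory.Measure (ℝ × ℝ)) : Prop :=
  (∀ k, IsFiniteMeasure (ϑ k)) ∧
  (∀ k, ϑ k Qᶜ = 0) ∧
  (∀ x ∈ Q, (∑ k, ϑ k (shift Cset x)) = 0) ∧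
  BddAbove {x : ℝ | 0 ≤ x ∧ 0 < ∑ k, ϑ k (Set.Ici x ×ˢ Set.Ici (0:ℝ))} ∧
  (∀ ε : ℝ, 0 < ε → ∃ k, 0 < Gk (D.Γ k) (wMeas ϑ - ε))

/-- `δ⁺_w`: the Dirac measure at `w` if `w > 0`, and the zero measure otherwise. -/
def deltaPlus (w : ℝ) : MeasureTheory.Measure ℝ :=
  if 0 < w then MeasureTheory.Measure.dirac w else 0

instance (w : ℝ) : SFinite (deltaPlus w) := by
  unfold deltaPlus; split_ifs <;> infer_instance

/-- `(δ⁺_w × Γ)(B)`, as a real number. -/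
def kern (Γ : MeasureTheory.Measure ℝ) (w : ℝ) (B : Set (ℝ × ℝ)) : ℝ :=
  (((deltaPlus w).prod Γ) B).toReal

/-- A (measure-valued) fluid model solution with initial measure `ϑ`: a family
`ζ(t) = (ζ_1(t),…,ζ_K(t))` of finite Borel measures on `[0,∞)²` with `ζ(0) = ϑ` satisfying
`ζ_k(t)(B) = ϑ_k(B_t) + λ_k ∫_0^t (δ⁺_{w(s)} × Γ_k)(B_{t−s}) ds` for every Borel
`B ⊆ [0,∞)²` and `t ≥ 0`, where `w` is the (unique) workload fluid model solution with
`w(0) = w_ϑ`. -/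
def IsFluidSol {K : ℕ} (D : Data K) (ϑ : Fin K → MeasureTheory.Measure (ℝ × ℝ))
    (ζ : ℝ → Fin K → MeasureTheory.Measure (ℝ × ℝ)) : Prop :=
  ∃ w : ℝ → ℝ, IsWorkloadSol D w ∧ w 0 = wMeas ϑ ∧
    (∀ t : ℝ, 0 ≤ t → ∀ k, IsFiniteMeasure (ζ t k) ∧ ζ t k Qᶜ = 0) ∧
    (∀ k, ζ 0 k = ϑ k) ∧
    (∀ k, ∀ B : Set (ℝ × ℝ), B ⊆ Q → MeasurableSet B → ∀ t : ℝ, 0 ≤ t →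
      IntervalIntegrable (fun s => kern (D.Γ k) (w s) (shiftd B (t - s))) volume 0 t ∧
      ζ t k B = ϑ k (shiftd B t) +
        ENNReal.ofReal (D.lam k * ∫ s in (0:ℝ)..t, kern (D.Γ k) (w s) (shiftd B (t - s))))

/-- The candidate invariant state `θ^w`:
`θ^w_k(B) = λ_k ∫_0^w Γ_k({p ≥ u : (w−u, p−u) ∈ B}) du`. -/
def thetaW {K : ℕ} (D : Data K) (w : ℝ) (k : Fin K) : MeasureTheory.Measure (ℝ × ℝ) :=
  ENNReal.ofReal (D.lam k) •
    MeasureTheory.Measure.map (fun up : ℝ × ℝ => (w - up.1, up.2 - up.1))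
      ((((MeasureTheory.volume.restrict (Set.Ioo (0:ℝ) w))).prod (D.Γ k)).restrict
        {up : ℝ × ℝ | up.1 ≤ up.2})


section DeadlineDistribution

open ProbabilityTheory

variable {Γ : Measure ℝ} [IsProbabilityMeasure Γ]

lemma Gk_eq_one_sub_cdf (x : ℝ) : Gk Γ x = 1 - cdf Γ x := by
  rw [Gk, cdf_eq_real, ← compl_Iic, ← probReal_compl_eq_one_sub measurableSet_Iic, measureReal_def]

lemma continuous_cdf_of_measure_singleton (h : ∀ x, Γ {x} = 0) : Continuous (cdf Γ) := by
  refine continuous_iff_continuousAt.2 fun x ↦ continuousAt_iff_continuous_left_right.2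
    ⟨continuousWithinAt_Iio_iff_Iic.1 ((monotone_cdf Γ).continuousWithinAt_Iio_iff_leftLim_eq.2 ?_),
      (cdf Γ).right_continuous x⟩
  have hjump := (cdf Γ).measure_singleton x
  rw [measure_cdf, h, eq_comm, ENNReal.ofReal_eq_zero, sub_nonpos] at hjump
  exact le_antisymm ((monotone_cdf Γ).leftLim_le le_rfl) hjump

lemma continuous_Gk (h : ∀ x, Γ {x} = 0) : Continuous (Gk Γ) := by
  rw [funext Gk_eq_one_sub_cdf]
  exact continuous_const.sub (continuous_cdf_of_measure_singleton h)

lemma antitone_Gk : Antitone (Gk Γ) := fun x y hxy ↦ by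
  simpa only [Gk_eq_one_sub_cdf, sub_le_sub_iff_left] using monotone_cdf Γ hxy

lemma tendsto_Gk_atTop : Tendsto (Gk Γ) atTop (𝓝 0) := by
  simpa only [funext Gk_eq_one_sub_cdf, sub_self] using (tendsto_cdf_atTop Γ).const_sub 1

lemma Gk_zero (hneg : Γ (Iio 0) = 0) (h0 : Γ {0} = 0) : Gk Γ 0 = 1 := by
  have hIic : Γ (Iic 0) = 0 := by
    rw [← Iio_insert, insert_eq]
    exact measure_union_null h0 hneg
  rw [Gk_eq_one_sub_cdf, cdf_eq_real, measureReal_def, hIic, ENNReal.toReal_zero, sub_zero]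

end DeadlineDistribution

section UpperInverse

variable {ψ : ℝ → ℝ} {x₀ a t x : ℝ}

/-- For `ψ` strictly increasing on `[x₀, a)`, this inverts `ψ` on its image and is extended by
`x₀` below `ψ x₀` and by `a` above the image. -/
def upperInverse (ψ : ℝ → ℝ) (x₀ a t : ℝ) : ℝ :=
  sSup (insert x₀ {x | x ∈ Ico x₀ a ∧ ψ x ≤ t})

lemma bddAbove_upperInverse_set (h : x₀ ≤ a) :
    BddAbove (insert x₀ {x | x ∈ Ico x₀ a ∧ ψ x ≤ t}) :=
  ⟨a, by rintro x (rfl | ⟨hx, -⟩); exacts [h, hx.2.le]⟩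

lemma upperInverse_mem_Icc (h : x₀ ≤ a) : upperInverse ψ x₀ a t ∈ Icc x₀ a :=
  ⟨le_csSup (bddAbove_upperInverse_set h) (mem_insert _ _),
    csSup_le (insert_nonempty _ _) (by rintro x (rfl | ⟨hx, -⟩); exacts [h, hx.2.le])⟩

lemma le_upperInverse (h : x₀ ≤ a) (hx : x ∈ Ico x₀ a) (hxt : ψ x ≤ t) :
    x ≤ upperInverse ψ x₀ a t :=
  le_csSup (bddAbove_upperInverse_set h) (mem_insert_of_mem _ ⟨hx, hxt⟩)

lemma monotone_upperInverse (h : x₀ ≤ a) : Monotone (upperInverse ψ x₀ a) := fun _ _ hst ↦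
  csSup_le_csSup (bddAbove_upperInverse_set h) (insert_nonempty _ _)
    (insert_subset_insert fun _ ⟨hx, hxt⟩ ↦ ⟨hx, hxt.trans hst⟩)

lemma lt_of_lt_upperInverse (hψ : StrictMonoOn ψ (Ico x₀ a)) (hx : x ∈ Ico x₀ a)
    (hxt : x < upperInverse ψ x₀ a t) : ψ x < t := by
  obtain ⟨y, hy, hxy⟩ := exists_lt_of_lt_csSup (insert_nonempty _ _) hxt
  rcases hy with rfl | ⟨hy, hyt⟩
  · exact absurd hx.1 hxy.not_ge
  · exact (hψ hx hy hxy).trans_le hyt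

lemma upperInverse_le (hψ : StrictMonoOn ψ (Ico x₀ a)) (hx : x ∈ Ico x₀ a) (htx : t < ψ x) :
    upperInverse ψ x₀ a t ≤ x :=
  csSup_le (insert_nonempty _ _) <| by
    rintro z (rfl | ⟨hz, hzt⟩)
    exacts [hx.1, ((hψ.lt_iff_lt hz hx).1 (hzt.trans_lt htx)).le]

lemma upperInverse_eq_of_le (hψ : StrictMonoOn ψ (Ico x₀ a)) (h : x₀ ≤ a) (ht : t ≤ ψ x₀) :
    upperInverse ψ x₀ a t = x₀ :=
  le_antisymm
    (csSup_le (insert_nonempty _ _) <| by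
      rintro z (rfl | ⟨hz, hzt⟩)
      exacts [le_rfl, (hψ.le_iff_le hz ⟨le_rfl, hz.1.trans_lt hz.2⟩).1 (hzt.trans ht)])
    (upperInverse_mem_Icc h).1

theorem continuous_upperInverse (hψ : StrictMonoOn ψ (Ico x₀ a)) (h : x₀ ≤ a) :
    Continuous (upperInverse ψ x₀ a) := by
  refine continuous_iff_continuousAt.2 fun t₀ ↦ tendsto_order.2 ⟨fun x hx ↦ ?_, fun x hx ↦ ?_⟩
  · rcases lt_or_ge x x₀ with hx₀ | hx₀
    · exact Eventually.of_forall fun t ↦ hx₀.trans_le (upperInverse_mem_Icc h).1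
    obtain ⟨y, hxy, hyt₀⟩ := exists_between hx
    have hy : y ∈ Ico x₀ a := ⟨hx₀.trans hxy.le, hyt₀.trans_le (upperInverse_mem_Icc h).2⟩
    filter_upwards [eventually_gt_nhds (lt_of_lt_upperInverse hψ hy hyt₀)] with t ht
    exact hxy.trans_le (le_upperInverse h hy ht.le)
  · rcases lt_or_ge a x with hax | hxa
    · exact Eventually.of_forall fun t ↦ (upperInverse_mem_Icc h).2.trans_lt hax
    obtain ⟨y, hty, hyx⟩ := exists_between hx
    have hy : y ∈ Ico x₀ a := ⟨(upperInverse_mem_Icc h).1.trans hty.le, hyx.trans_le hxa⟩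
    have ht₀y : t₀ < ψ y := lt_of_not_ge fun hyt₀ ↦ hty.not_ge (le_upperInverse h hy hyt₀)
    filter_upwards [eventually_lt_nhds ht₀y] with t ht
    exact (upperInverse_le hψ hy ht).trans_lt hyx

theorem apply_upperInverse (hψ : StrictMonoOn ψ (Ico x₀ a)) (hc : ∀ x ∈ Ico x₀ a, ContinuousAt ψ x)
    (h : x₀ ≤ a) (ht : ψ x₀ ≤ t) (hta : upperInverse ψ x₀ a t < a) :
    ψ (upperInverse ψ x₀ a t) = t := by
  set m := upperInverse ψ x₀ a t
  have hm : m ∈ Ico x₀ a := ⟨(upperInverse_mem_Icc h).1, hta⟩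
  refine le_antisymm ?_ ?_
  · rcases hm.1.eq_or_lt with hxm | hxm
    · rwa [← hxm]
    refine le_of_tendsto ((hc m hm).mono_left (nhdsWithin_le_nhds (s := Iio m))) ?_
    filter_upwards [Ioo_mem_nhdsLT hxm] with x hx
    exact (lt_of_lt_upperInverse hψ ⟨hx.1.le, hx.2.trans hta⟩ hx.2).le
  · refine ge_of_tendsto ((hc m hm).mono_left (nhdsWithin_le_nhds (s := Ioi m))) ?_
    filter_upwards [Ioo_mem_nhdsGT hta] with x hx
    exact le_of_not_ge fun hxt ↦ hx.1.not_ge (le_upperInverse h ⟨hm.1.trans hx.1.le, hx.2⟩ hxt)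

end UpperInverse

section AutonomousODE

variable {F : ℝ → ℝ} {x₀ a l u : ℝ} {w w₁ w₂ : ℝ → ℝ}

def IsIntegralSolution (F : ℝ → ℝ) (x₀ : ℝ) (w : ℝ → ℝ) : Prop :=
  ∀ t, 0 ≤ t → IntervalIntegrable (fun s ↦ F (w s)) volume 0 t ∧
    w t = x₀ + ∫ s in (0 : ℝ)..t, F (w s)

lemma IsIntegralSolution.apply_zero (h : IsIntegralSolution F x₀ w) : w 0 = x₀ := by
  simpa using (h 0 le_rfl).2

lemma hasDerivAt_integral_inv (hF : Continuous F) (hpos : ∀ x ∈ Ico x₀ a, 0 < F x) {x : ℝ}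
    (hx : x ∈ Ico x₀ a) : HasDerivAt (fun y ↦ ∫ u in x₀..y, (F u)⁻¹) (F x)⁻¹ x := by
  refine intervalIntegral.integral_hasDerivAt_right ?_
    (hF.measurable.inv.aestronglyMeasurable.stronglyMeasurableAtFilter)
    (hF.continuousAt.inv₀ (hpos x hx).ne')
  refine ContinuousOn.intervalIntegrable (hF.continuousOn.inv₀ fun u hu ↦ (hpos u ?_).ne')
  rw [uIcc_of_le hx.1] at hu
  exact ⟨hu.1, hu.2.trans_lt hx.2⟩

theorem exists_isIntegralSolution_of_pos_of_eq_zero (hF : Continuous F) (hxa : x₀ ≤ a)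
    (hpos : ∀ x ∈ Ico x₀ a, 0 < F x) (ha : F a = 0) :
    ∃ w, Continuous w ∧ IsIntegralSolution F x₀ w ∧ ∀ t, w t ∈ Icc x₀ a := by
  set ψ : ℝ → ℝ := fun y ↦ ∫ u in x₀..y, (F u)⁻¹
  have hψ' := fun x (hx : x ∈ Ico x₀ a) ↦ hasDerivAt_integral_inv hF hpos hx
  have hψ : StrictMonoOn ψ (Ico x₀ a) :=
    strictMonoOn_of_hasDerivWithinAt_pos (convex_Ico x₀ a)
      (fun x hx ↦ (hψ' x hx).continuousAt.continuousWithinAt)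
      (fun x hx ↦ (hψ' x (interior_subset hx)).hasDerivWithinAt)
      (fun x hx ↦ inv_pos.2 (hpos x (interior_subset hx)))
  have hψ₀ : ψ x₀ = 0 := intervalIntegral.integral_same
  set w := upperInverse ψ x₀ a
  have hwc : Continuous w := continuous_upperInverse hψ hxa
  have hw₀ : w 0 = x₀ := upperInverse_eq_of_le hψ hxa hψ₀.ge
  have hderiv : ∀ t, 0 < t → HasDerivWithinAt w (F (w t)) (Ioi t) t := by
    intro t ht
    rcases (show w t ≤ a from (upperInverse_mem_Icc hxa).2).lt_or_eq with hta | hta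
    · have hmem : w t ∈ Ico x₀ a := ⟨(upperInverse_mem_Icc hxa).1, hta⟩
      have hinv : ∀ᶠ s in 𝓝 t, ψ (w s) = s := by
        filter_upwards [eventually_gt_nhds ht,
          hwc.continuousAt.eventually_lt continuousAt_const hta] with s hs hsa
        exact apply_upperInverse hψ (fun x hx ↦ (hψ' x hx).continuousAt) hxa
          (hψ₀.trans_le hs.le) hsa
      simpa only [inv_inv] using (HasDerivAt.of_local_left_inverse hwc.continuousAt
        (hψ' _ hmem) (inv_pos.2 (hpos _ hmem)).ne' hinv).hasDerivWithinAt
    · have hconst : EqOn w (fun _ ↦ a) (Ioi t) := fun s hs ↦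
        le_antisymm (upperInverse_mem_Icc hxa).2 (hta ▸ monotone_upperInverse hxa (le_of_lt hs))
      rw [hta, ha]
      exact (hasDerivWithinAt_const t _ a).congr hconst hta
  refine ⟨w, hwc, fun t ht ↦ ⟨(hF.comp hwc).intervalIntegrable 0 t, ?_⟩,
    fun t ↦ upperInverse_mem_Icc hxa⟩
  rw [intervalIntegral.integral_eq_sub_of_hasDeriv_right_of_le ht hwc.continuousOn
    (fun s hs ↦ hderiv s hs.1) ((hF.comp hwc).intervalIntegrable 0 t), hw₀]
  ring

theorem exists_isIntegralSolution_of_nonneg_of_nonpos (hF : Continuous F) (hxu : x₀ ≤ u)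
    (hx₀ : 0 ≤ F x₀) (hu : F u ≤ 0) :
    ∃ w, Continuous w ∧ IsIntegralSolution F x₀ w ∧ ∀ t, w t ∈ Icc x₀ u := by
  set S := {x | x ∈ Icc x₀ u ∧ F x ≤ 0}
  have hSbdd : BddBelow S := ⟨x₀, fun x hx ↦ hx.1.1⟩
  set a := sInf S
  have haS : a ∈ S :=
    (isClosed_Icc.inter (isClosed_le hF continuous_const)).csInf_mem ⟨u, ⟨hxu, le_rfl⟩, hu⟩ hSbdd
  have hpos : ∀ x ∈ Ico x₀ a, 0 < F x := fun x hx ↦ lt_of_not_ge fun hFx ↦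
    hx.2.not_ge (csInf_le hSbdd ⟨⟨hx.1, hx.2.le.trans haS.1.2⟩, hFx⟩)
  have hzero : F a = 0 := by
    obtain ⟨c, hc, hFc⟩ := intermediate_value_Icc' haS.1.1 hF.continuousOn ⟨haS.2, hx₀⟩
    have hac : a ≤ c := csInf_le hSbdd ⟨⟨hc.1, hc.2.trans haS.1.2⟩, hFc.le⟩
    rwa [le_antisymm hc.2 hac] at hFc
  obtain ⟨w, hwc, hw, hmem⟩ := exists_isIntegralSolution_of_pos_of_eq_zero hF haS.1.1 hpos hzero
  exact ⟨w, hwc, hw, fun t ↦ ⟨(hmem t).1, (hmem t).2.trans haS.1.2⟩⟩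

theorem exists_isIntegralSolution_of_nonpos_of_nonneg (hF : Continuous F) (hlx : l ≤ x₀)
    (hx₀ : F x₀ ≤ 0) (hl : 0 ≤ F l) :
    ∃ w, Continuous w ∧ IsIntegralSolution F x₀ w ∧ ∀ t, w t ∈ Icc l x₀ := by
  obtain ⟨v, hvc, hv, hmem⟩ := exists_isIntegralSolution_of_nonneg_of_nonpos
    (F := fun x ↦ -F (-x)) (hF.comp continuous_neg).neg (neg_le_neg hlx)
    (by simpa using hx₀) (by simpa using hl)
  refine ⟨fun t ↦ -v t, hvc.neg, fun t ht ↦ ⟨?_, ?_⟩, fun t ↦ ?_⟩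
  · exact (hF.comp hvc.neg).intervalIntegrable 0 t
  · change -v t = x₀ + ∫ s in (0 : ℝ)..t, F (-v s)
    rw [(hv t ht).2, intervalIntegral.integral_neg, neg_add, neg_neg, neg_neg]
  · exact ⟨le_neg.2 (hmem t).2, neg_le.2 (hmem t).1⟩

theorem exists_isIntegralSolution_mem_Icc (hF : Continuous F) (hlx : l ≤ x₀) (hxu : x₀ ≤ u)
    (hl : 0 ≤ F l) (hu : F u ≤ 0) :
    ∃ w, Continuous w ∧ IsIntegralSolution F x₀ w ∧ ∀ t, w t ∈ Icc l u := by
  rcases le_total 0 (F x₀) with hx₀ | hx₀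
  · obtain ⟨w, hwc, hw, hmem⟩ := exists_isIntegralSolution_of_nonneg_of_nonpos hF hxu hx₀ hu
    exact ⟨w, hwc, hw, fun t ↦ ⟨hlx.trans (hmem t).1, (hmem t).2⟩⟩
  · obtain ⟨w, hwc, hw, hmem⟩ := exists_isIntegralSolution_of_nonpos_of_nonneg hF hlx hx₀ hl
    exact ⟨w, hwc, hw, fun t ↦ ⟨(hmem t).1, (hmem t).2.trans hxu⟩⟩

lemma IsIntegralSolution.continuousOn (h : IsIntegralSolution F x₀ w) :
    ContinuousOn w (Ici 0) := by
  intro t ht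
  have hT : (0 : ℝ) ≤ t + 1 := by linarith [mem_Ici.1 ht]
  have hint : IntegrableOn (fun s ↦ F (w s)) (uIcc 0 (t + 1)) := by
    rw [uIcc_of_le hT]
    exact (intervalIntegrable_iff_integrableOn_Icc_of_le hT).1 (h (t + 1) hT).1
  have hprim := intervalIntegral.continuousOn_primitive_interval hint
  rw [uIcc_of_le hT] at hprim
  refine ((continuousOn_const.add hprim).congr (fun s hs ↦ (h s hs.1).2) t
    ⟨ht, by linarith⟩).mono_of_mem_nhdsWithin ?_
  exact mem_of_superset (inter_mem_nhdsWithin _ (Iio_mem_nhds (lt_add_one t)))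
    fun s hs ↦ ⟨hs.1, hs.2.le⟩

lemma IsIntegralSolution.hasDerivAt (hF : Continuous F) (h : IsIntegralSolution F x₀ w) {t : ℝ}
    (ht : 0 < t) : HasDerivAt w (F (w t)) t := by
  have hFw : ContinuousOn (fun s ↦ F (w s)) (Ioi 0) :=
    hF.comp_continuousOn (h.continuousOn.mono Ioi_subset_Ici_self)
  have hprim := intervalIntegral.integral_hasDerivAt_right (h t ht.le).1
    (hFw.stronglyMeasurableAtFilter isOpen_Ioi t ht) (hFw.continuousAt (Ioi_mem_nhds ht))
  refine (hprim.const_add x₀).congr_of_eventuallyEq ?_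
  filter_upwards [eventually_gt_nhds ht] with s hs
  exact (h s hs.le).2

theorem IsIntegralSolution.eqOn (hF : Continuous F) (hanti : Antitone F)
    (h₁ : IsIntegralSolution F x₀ w₁) (h₂ : IsIntegralSolution F x₀ w₂) : EqOn w₁ w₂ (Ici 0) := by
  have hsq : AntitoneOn (fun t ↦ (w₁ t - w₂ t) ^ 2) (Ici 0) := by
    refine antitoneOn_of_hasDerivWithinAt_nonpos (convex_Ici 0)
      (f' := fun t ↦ 2 * ((F (w₁ t) - F (w₂ t)) * (w₁ t - w₂ t)))
      ((h₁.continuousOn.sub h₂.continuousOn).pow 2) (fun t ht ↦ ?_) (fun t _ ↦ ?_)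
    · rw [interior_Ici] at ht
      refine ((((h₁.hasDerivAt hF ht).sub (h₂.hasDerivAt hF ht)).pow 2).congr_deriv ?_)
        |>.hasDerivWithinAt
      norm_num
      ring
    · exact mul_nonpos_of_nonneg_of_nonpos zero_le_two
        ((hanti.antivary monotone_id).sub_mul_sub_nonpos (w₂ t) (w₁ t))
  intro t ht
  have := hsq self_mem_Ici ht ht
  simp only [h₁.apply_zero, h₂.apply_zero, sub_self] at this
  nlinarith [sq_nonneg (w₁ t - w₂ t)]

end AutonomousODE

section Workload

variable {K : ℕ} (D : Data K)

def Data.drift (x : ℝ) : ℝ := (∑ k, D.rho k * Gk (D.Γ k) x) - 1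

lemma Data.rho_pos (k : Fin K) : 0 < D.rho k := div_pos (D.lam_pos k) (D.mu_pos k)

lemma Data.continuous_drift : Continuous D.drift :=
  (continuous_finsetSum _ fun k _ ↦ continuous_const.mul (continuous_Gk (D.Γ_noAtom k))).sub
    continuous_const

lemma Data.antitone_drift : Antitone D.drift := fun _ _ hxy ↦
  sub_le_sub_right (Finset.sum_le_sum fun k _ ↦
    mul_le_mul_of_nonneg_left (antitone_Gk hxy) (D.rho_pos k).le) 1

lemma Data.drift_zero_pos : 0 < D.drift 0 := by
  simp only [Data.drift, Gk_zero (D.Γ_null_neg _) (D.Γ_noAtom _ 0), mul_one, sub_pos]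
  exact D.rho_gt_one

lemma Data.exists_drift_nonpos (c : ℝ) : ∃ u, c ≤ u ∧ D.drift u ≤ 0 := by
  have hlim : Tendsto D.drift atTop (𝓝 (-1)) := by
    unfold Data.drift
    simpa using (tendsto_finsetSum Finset.univ fun k _ ↦
      (tendsto_Gk_atTop (Γ := D.Γ k)).const_mul (D.rho k)).sub_const 1
  exact ((eventually_ge_atTop c).and
    (hlim.eventually (eventually_le_nhds (by norm_num : (-1 : ℝ) < 0)))).exists

variable {D} {w : ℝ → ℝ} {t : ℝ}

section

variable (hint : ∀ k, IntervalIntegrable (fun s ↦ Gk (D.Γ k) (w s)) volume 0 t)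
include hint

lemma Data.intervalIntegrable_sum_comp :
    IntervalIntegrable (fun s ↦ ∑ k, D.rho k * Gk (D.Γ k) (w s)) volume 0 t := by
  simpa only [Finset.sum_fn] using
    IntervalIntegrable.sum _ fun k _ ↦ (hint k).const_mul (D.rho k)

lemma Data.intervalIntegrable_drift_comp :
    IntervalIntegrable (fun s ↦ D.drift (w s)) volume 0 t :=
  (D.intervalIntegrable_sum_comp hint).sub intervalIntegrable_const

lemma Data.integral_drift_comp :
    ∫ s in (0 : ℝ)..t, D.drift (w s) =
      (∑ k, D.rho k * ∫ s in (0 : ℝ)..t, Gk (D.Γ k) (w s)) - t := by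
  simp only [Data.drift]
  rw [intervalIntegral.integral_sub (D.intervalIntegrable_sum_comp hint) intervalIntegrable_const,
    intervalIntegral.integral_finsetSum fun k _ ↦ (hint k).const_mul _]
  simp

end

lemma IsWorkloadSol.isIntegralSolution (h : IsWorkloadSol D w) :
    IsIntegralSolution D.drift (w 0) w := fun t ht ↦
  ⟨D.intervalIntegrable_drift_comp (h.2.1 · t ht), by
    rw [D.integral_drift_comp (h.2.1 · t ht), h.2.2 t ht]; ring⟩

lemma isWorkloadSol_of_isIntegralSolution {x₀ : ℝ} (hc : Continuous w) (hnn : ∀ t, 0 ≤ w t)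
    (h : IsIntegralSolution D.drift x₀ w) : IsWorkloadSol D w := by
  have hint : ∀ k t, IntervalIntegrable (fun s ↦ Gk (D.Γ k) (w s)) volume 0 t := fun k t ↦
    ((continuous_Gk (D.Γ_noAtom k)).comp hc).intervalIntegrable 0 t
  refine ⟨fun t _ ↦ hnn t, fun k t _ ↦ hint k t, fun t ht ↦ ?_⟩
  rw [h.apply_zero, (h t ht).2, D.integral_drift_comp (hint · t)]
  ring

end Workload

/-- For every `w_0 ≥ 0` there exists a unique workload fluid model solution
`w` with `w(0) = w_0` (unique as a function on `[0,∞)`). -/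
theorem workload_exists_unique {K : ℕ} (D : Data K) (w₀ : ℝ) (hw₀ : 0 ≤ w₀) :
    (∃ w : ℝ → ℝ, IsWorkloadSol D w ∧ w 0 = w₀) ∧
    (∀ w₁ w₂ : ℝ → ℝ, IsWorkloadSol D w₁ → IsWorkloadSol D w₂ →
      w₁ 0 = w₀ → w₂ 0 = w₀ → ∀ t : ℝ, 0 ≤ t → w₁ t = w₂ t) := by
  refine ⟨?_, fun w₁ w₂ h₁ h₂ h₁0 h₂0 t ht ↦ ?_⟩
  · obtain ⟨u, hu, hdu⟩ := D.exists_drift_nonpos w₀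
    obtain ⟨w, hwc, hw, hmem⟩ := exists_isIntegralSolution_mem_Icc D.continuous_drift hw₀ hu
      D.drift_zero_pos.le hdu
    exact ⟨w, isWorkloadSol_of_isIntegralSolution hwc (fun t ↦ (hmem t).1) hw, hw.apply_zero⟩
  · have hsol₁ : IsIntegralSolution D.drift w₀ w₁ := h₁0 ▸ h₁.isIntegralSolution
    have hsol₂ : IsIntegralSolution D.drift w₀ w₂ := h₂0 ▸ h₂.isIntegralSolution
    exact hsol₁.eqOn D.continuous_drift D.antitone_drift hsol₂ ht

end OverloadedFIFO
end
end

section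
/- Relative ordering of workload fluid model solutions: if w_1 and w_2 are workload fluid model solutions with w_1(0) ≤ w_2(0), then w_1(t) ≤ w_2(t) for all t ≥ 0. -/
open MeasureTheory Set Filter Topology
open scoped ENNReal

noncomputable section

namespace OverloadedFIFO

/-! The gap `w₁ - w₂` is continuous, so if it became positive there would be a last time
`σ` before `t` with `w₁ σ ≤ w₂ σ`. On `(σ, t]` we have `w₂ < w₁`, and since every `G_k` is
antitone, `w₁` then gains at most as much workload as `w₂` over `[σ, t]`, so `w₁ t ≤ w₂ t`. -/

lemma le_of_forall_sub_le_sub_of_ge_on {f g : ℝ → ℝ} {a b : ℝ} (hab : a ≤ b)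
    (hf : ContinuousOn f (Icc a b)) (hg : ContinuousOn g (Icc a b)) (ha : f a ≤ g a)
    (hinc : ∀ c ∈ Icc a b, (∀ s ∈ Ioc c b, g s ≤ f s) → f b - f c ≤ g b - g c) :
    f b ≤ g b := by
  by_contra! hlt
  set S : Set ℝ := Icc a b ∩ (fun s => f s - g s) ⁻¹' Iic 0
  have hS_closed : IsClosed S :=
    (hf.sub hg).preimage_isClosed_of_isClosed isClosed_Icc isClosed_Iic
  have hS_bdd : BddAbove S := ⟨b, fun s hs => hs.1.2⟩
  have haS : a ∈ S := ⟨left_mem_Icc.2 hab, by simpa using ha⟩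
  obtain ⟨hσ, hσ_le⟩ : sSup S ∈ S := hS_closed.csSup_mem ⟨a, haS⟩ hS_bdd
  have hge : ∀ s ∈ Ioc (sSup S) b, g s ≤ f s := fun s hs => by
    by_contra! hfg
    have hsS : s ∈ S := ⟨⟨hσ.1.trans hs.1.le, hs.2⟩, by simpa using hfg.le⟩
    exact (le_csSup hS_bdd hsS).not_gt hs.1
  have hinc_σ := hinc _ hσ hge
  simp only [mem_preimage, mem_Iic] at hσ_le
  linarith

lemma Gk_antitone (Γ : Measure ℝ) [IsFiniteMeasure Γ] : Antitone (Gk Γ) := fun _ _ hxy =>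
  ENNReal.toReal_mono (measure_ne_top Γ _) (measure_mono (Ioi_subset_Ioi hxy))

lemma Data.rho_nonneg {K : ℕ} (D : Data K) (k : Fin K) : 0 ≤ D.rho k :=
  div_nonneg (D.lam_pos k).le (D.mu_pos k).le

namespace IsWorkloadSol

variable {K : ℕ} {D : Data K} {w : ℝ → ℝ}

lemma intervalIntegrable (hw : IsWorkloadSol D w) (k : Fin K) {a b : ℝ} (ha : 0 ≤ a)
    (hb : 0 ≤ b) : IntervalIntegrable (fun s => Gk (D.Γ k) (w s)) volume a b :=
  (hw.2.1 k a ha).symm.trans (hw.2.1 k b hb)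

lemma continuousOn (hw : IsWorkloadSol D w) {T : ℝ} (hT : 0 ≤ T) : ContinuousOn w (Icc 0 T) := by
  have hprim : ∀ k, ContinuousOn (fun t => ∫ s in (0:ℝ)..t, Gk (D.Γ k) (w s)) (Icc 0 T) :=
    fun k => by
      simpa only [uIcc_of_le hT] using intervalIntegral.continuousOn_primitive_interval'
        (hw.2.1 k T hT) left_mem_uIcc
  refine ContinuousOn.congr ?_ fun t ht => hw.2.2 t ht.1
  exact (continuousOn_const.add (continuousOn_finsetSum _ fun k _ =>
    continuousOn_const.mul (hprim k))).sub continuousOn_id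

lemma eq_add_sum_integral_sub (hw : IsWorkloadSol D w) {a b : ℝ} (ha : 0 ≤ a) (hb : 0 ≤ b) :
    w b = w a + (∑ k, D.rho k * ∫ s in a..b, Gk (D.Γ k) (w s)) - (b - a) := by
  have hsplit : ∀ k, ∫ s in a..b, Gk (D.Γ k) (w s) =
      (∫ s in (0:ℝ)..b, Gk (D.Γ k) (w s)) - ∫ s in (0:ℝ)..a, Gk (D.Γ k) (w s) := fun k =>
    (intervalIntegral.integral_interval_sub_left (hw.2.1 k b hb) (hw.2.1 k a ha)).symm
  simp only [hsplit, mul_sub, Finset.sum_sub_distrib]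
  linarith [hw.2.2 a ha, hw.2.2 b hb]

lemma sub_le_sub_of_ge_on {v : ℝ → ℝ} (hw : IsWorkloadSol D w) (hv : IsWorkloadSol D v)
    {a b : ℝ} (ha : 0 ≤ a) (hab : a ≤ b) (hge : ∀ s ∈ Ioc a b, v s ≤ w s) :
    w b - w a ≤ v b - v a := by
  have hb := ha.trans hab
  have hint : ∀ k, ∫ s in a..b, Gk (D.Γ k) (w s) ≤ ∫ s in a..b, Gk (D.Γ k) (v s) := fun k =>
    intervalIntegral.integral_mono_on_of_le_Ioo hab (hw.intervalIntegrable k ha hb)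
      (hv.intervalIntegrable k ha hb)
      fun s hs => Gk_antitone (D.Γ k) (hge s (Ioo_subset_Ioc_self hs))
  have hsum := Finset.sum_le_sum fun k (_ : k ∈ Finset.univ) =>
    mul_le_mul_of_nonneg_left (hint k) (D.rho_nonneg k)
  linarith [hw.eq_add_sum_integral_sub ha hb, hv.eq_add_sum_integral_sub ha hb]

end IsWorkloadSol

/-- Relative ordering: if `w₁, w₂` are workload fluid model solutions with
`w₁(0) ≤ w₂(0)`, then `w₁(t) ≤ w₂(t)` for all `t ≥ 0`. -/
theorem workload_ordering {K : ℕ} (D : Data K) (w₁ w₂ : ℝ → ℝ)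
    (h₁ : IsWorkloadSol D w₁) (h₂ : IsWorkloadSol D w₂) (h0 : w₁ 0 ≤ w₂ 0) :
    ∀ t : ℝ, 0 ≤ t → w₁ t ≤ w₂ t := fun _ ht =>
  le_of_forall_sub_le_sub_of_ge_on ht (h₁.continuousOn ht) (h₂.continuousOn ht) h0
    fun _ hc hge => h₁.sub_le_sub_of_ge_on h₂ hc.1 hc.2 hge

end OverloadedFIFO
end
end

section
/- Let ϑ = (ϑ_1,…,ϑ_K) be a K-tuple of finite Borel measures on [0,∞)² such that ϑ_+(C_x) = 0 for all x ∈ [0,∞)². Then for every ε > 0 there exists κ > 0 such that max_{1≤k≤K} sup_{x∈[0,∞)²} ϑ_k(C_x^κ) < ε. -/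
open MeasureTheory Set Filter Topology
open scoped ENNReal

noncomputable section

namespace OverloadedFIFO

/-! The hypothesis makes every horizontal and vertical line null for `ϑ_+`, so both marginals
of `ϑ_+` are finite atomless measures on `ℝ`. Such a measure gives uniformly small mass to all
balls of a small fixed radius: tightness reduces to a compact set, where a Lebesgue number of a
cover by small-mass balls works. Finally `C_x^κ` lies in the union of the strips of half-width `κ`
around the two lines through `x`, whose masses are marginal masses of `κ`-balls. -/

section UniformlySmallBalls

variable {α : Type*} [MetricSpace α] [MeasurableSpace α] [OpensMeasurableSpace α]
  {μ : Measure α} [IsFiniteMeasure μ] {ε : ℝ≥0∞}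

theorem exists_pos_measure_ball_lt {a : α} (ha : μ {a} = 0) (hε : 0 < ε) :
    ∃ r > 0, μ (Metric.ball a r) < ε := by
  have hlim := tendsto_measure_thickening_of_isClosed (μ := μ)
    ⟨1, one_pos, measure_ne_top μ _⟩ (isClosed_singleton (x := a))
  rw [ha] at hlim
  obtain ⟨r, hr, hrε⟩ := ((hlim.eventually_lt_const hε).and self_mem_nhdsWithin).exists
  exact ⟨r, hrε, by rwa [Metric.thickening_singleton] at hr⟩

theorem exists_pos_forall_measure_ball_lt [CompleteSpace α] [SecondCountableTopology α]
    (hμ : ∀ a, μ {a} = 0) (hε : 0 < ε) : ∃ κ > 0, ∀ a, μ (Metric.ball a κ) < ε := by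
  obtain ⟨K, hK, hKε⟩ := exists_isCompact_closure_measure_compl_lt μ ε hε
  choose r hr hrε using fun a => exists_pos_measure_ball_lt (hμ a) hε
  obtain ⟨δ, hδ, hcover⟩ := lebesgue_number_lemma_of_metric hK (fun a => Metric.isOpen_ball)
    (fun y _ => mem_iUnion.2 ⟨y, Metric.mem_ball_self (hr y)⟩)
  refine ⟨δ / 2, half_pos hδ, fun a => ?_⟩
  by_cases hmeet : (Metric.ball a (δ / 2) ∩ closure K).Nonempty
  · obtain ⟨y, hya, hyK⟩ := hmeet
    obtain ⟨c, hc⟩ := hcover y hyK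
    have hsub : Metric.ball a (δ / 2) ⊆ Metric.ball y δ :=
      Metric.ball_subset_ball' (by linarith [Metric.mem_ball'.1 hya])
    exact (measure_mono (hsub.trans hc)).trans_lt (hrε c)
  · have hsub : Metric.ball a (δ / 2) ⊆ Kᶜ := fun z hz hzK =>
      hmeet ⟨z, hz, subset_closure hzK⟩
    exact (measure_mono hsub).trans_lt hKε

end UniformlySmallBalls

theorem enlarge_shift_Cset_subset (x : ℝ × ℝ) (κ : ℝ) :
    enlarge (shift Cset x) κ ⊆
      Prod.fst ⁻¹' Metric.ball x.1 κ ∪ Prod.snd ⁻¹' Metric.ball x.2 κ := by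
  rintro y ⟨-, z, ⟨-, hz⟩, hyz⟩
  simp only [mem_union, mem_preimage, Metric.mem_ball, Real.dist_eq]
  rcases hz with ⟨-, hz₂⟩ | ⟨hz₁, -⟩
  · right
    rw [← sub_eq_zero.1 hz₂]
    exact (Real.abs_le_sqrt (le_add_of_nonneg_left (sq_nonneg _))).trans_lt hyz
  · left
    rw [← sub_eq_zero.1 hz₁]
    exact (Real.abs_le_sqrt (le_add_of_nonneg_right (sq_nonneg _))).trans_lt hyz

section CornerNull

variable {μ : Measure (ℝ × ℝ)} (hQ : μ Qᶜ = 0) (hC : ∀ x ∈ Q, μ (shift Cset x) = 0)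
include hQ hC

theorem measure_fst_preimage_singleton_eq_zero (a : ℝ) : μ (Prod.fst ⁻¹' {a}) = 0 := by
  refine measure_mono_null (fun y (hy : y.1 = a) => ?_)
    (measure_union_null (hC (max a 0, 0) ⟨le_max_right a 0, le_rfl⟩) hQ)
  by_cases hyQ : y ∈ Q
  · exact Or.inl ⟨hyQ, Or.inr ⟨by simp [hy, hy ▸ hyQ.1], by simpa using hyQ.2⟩⟩
  · exact Or.inr hyQ

theorem measure_snd_preimage_singleton_eq_zero (a : ℝ) : μ (Prod.snd ⁻¹' {a}) = 0 := by
  refine measure_mono_null (fun y (hy : y.2 = a) => ?_)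
    (measure_union_null (hC (0, max a 0) ⟨le_rfl, le_max_right a 0⟩) hQ)
  by_cases hyQ : y ∈ Q
  · exact Or.inl ⟨hyQ, Or.inl ⟨by simpa using hyQ.1, by simp [hy, hy ▸ hyQ.2]⟩⟩
  · exact Or.inr hyQ

end CornerNull

theorem exists_pos_forall_measure_enlarge_shift_Cset_lt (μ : Measure (ℝ × ℝ))
    [IsFiniteMeasure μ] (hQ : μ Qᶜ = 0) (hC : ∀ x ∈ Q, μ (shift Cset x) = 0)
    {ε : ℝ≥0∞} (hε : 0 < ε) : ∃ κ > 0, ∀ x, μ (enlarge (shift Cset x) κ) < ε := by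
  set ν := μ.map Prod.fst + μ.map Prod.snd
  have hν : ∀ a, ν {a} = 0 := fun a => by
    simp [ν, Measure.map_apply measurable_fst, Measure.map_apply measurable_snd,
      measure_fst_preimage_singleton_eq_zero hQ hC, measure_snd_preimage_singleton_eq_zero hQ hC]
  obtain ⟨κ, hκ, hball⟩ := exists_pos_forall_measure_ball_lt hν (ENNReal.half_pos hε.ne')
  refine ⟨κ, hκ, fun x => ?_⟩
  calc μ (enlarge (shift Cset x) κ)
      ≤ μ (Prod.fst ⁻¹' Metric.ball x.1 κ) + μ (Prod.snd ⁻¹' Metric.ball x.2 κ) :=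
        (measure_mono (enlarge_shift_Cset_subset x κ)).trans (measure_union_le _ _)
    _ ≤ ν (Metric.ball x.1 κ) + ν (Metric.ball x.2 κ) := by
        gcongr
        · exact (Measure.le_map_apply measurable_fst.aemeasurable _).trans le_self_add
        · exact (Measure.le_map_apply measurable_snd.aemeasurable _).trans le_add_self
    _ < ε / 2 + ε / 2 := ENNReal.add_lt_add (hball _) (hball _)
    _ = ε := ENNReal.add_halves ε

/-- If a `K`-tuple `ϑ` of finite Borel measures on `[0,∞)²` satisfies
`ϑ_+(C_x) = 0` for all `x ∈ [0,∞)²`, then for every `ε > 0` there is `κ > 0` with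
`max_k sup_{x ∈ [0,∞)²} ϑ_k(C_x^κ) < ε`. -/
theorem corner_enlargement_small {K : ℕ}
    (ϑ : Fin K → MeasureTheory.Measure (ℝ × ℝ))
    (hfin : ∀ k, IsFiniteMeasure (ϑ k)) (hsupp : ∀ k, ϑ k Qᶜ = 0)
    (hC : ∀ x ∈ Q, (∑ k, ϑ k (shift Cset x)) = 0) :
    ∀ ε : ℝ, 0 < ε → ∃ κ : ℝ, 0 < κ ∧
      ∀ k, ∀ x ∈ Q, ϑ k (enlarge (shift Cset x) κ) < ENNReal.ofReal ε := by
  intro ε hε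
  obtain ⟨κ, hκ, hsmall⟩ := exists_pos_forall_measure_enlarge_shift_Cset_lt (∑ k, ϑ k)
    (by simp [hsupp]) (fun x hx => by simpa using hC x hx) (ENNReal.ofReal_pos.2 hε)
  refine ⟨κ, hκ, fun k x _ => (?_ : ϑ k _ ≤ _).trans_lt (hsmall x)⟩
  exact Finset.single_le_sum (f := ϑ) (fun _ _ => Measure.zero_le _) (Finset.mem_univ k) _

end OverloadedFIFO
end
end
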